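/- For an update flow network with two flow pairs whose dependency graph D is acyclic, the minimum number of rounds of a feasible update sequence is at least L + 1, where L is the number of vertices on a longest directed path in D, whenever the first block on such a path has at least 2 update edges or its last block has at least 2 old edges. -/

import Mathlib

/-!
A formal model of congestion-free flow rerouting (network update scheduling).
An update flow network consists of a source `s`, a terminal `t`, edge
capacities, and `k` update flow pairs, each given by an old `s`-`t` path and
an update (new) `s`-`t` path (represented as lists of vertices) with a demand.
An update sequence assigns to every update `(v, i)` (vertex `v`, pair `i`) a
round; it is feasible if resolving all updates of earlier rounds together with
any subset of the current round always leaves, for every pair, a unique valid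
(capacity-respecting) transient `s`-`t` path among the active edges, and the
family of transient paths jointly respects the capacities.
-/

namespace FlowUpdate

variable {V : Type} [DecidableEq V] {k : ℕ}

/-- The edges of a path given as a list of vertices. -/
def edgesOf (p : List V) : List (V × V) := p.zip p.tail

/-- The subpath of `p` from vertex `a` to vertex `z` (inclusive). -/
def segment (p : List V) (a z : V) : List V :=
  ((p.dropWhile (fun v => decide (v ≠ a))).takeWhile (fun v => decide (v ≠ z))) ++ [z]

/-- The outgoing edge of `v` on the path `p`, if any. -/
def outEdge (p : List V) (v : V) : Option (V × V) :=
  (edgesOf p).find? (fun e => decide (e.1 = v))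

/-- An update flow network with `k` update flow pairs. -/
structure UFN (V : Type) (k : ℕ) where
  s : V
  t : V
  cap : V → V → ℕ
  old : Fin k → List V
  new : Fin k → List V
  demand : Fin k → ℕ

namespace UFN

/-- After resolving the set of updates `U`, edge `e` is active for pair `i` iff
it is an old edge whose tail is not yet updated, or a new edge whose tail is
updated. -/
def active (G : UFN V k) (U : Set (V × Fin k)) (i : Fin k) (e : V × V) : Prop :=
  (e ∈ edgesOf (G.old i) ∧ (e.1, i) ∉ U) ∨ (e ∈ edgesOf (G.new i) ∧ (e.1, i) ∈ U)

/-- `p` is a simple `s`-`t` path all of whose edges satisfy `E`. -/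
def IsPathIn (E : V × V → Prop) (s t : V) (p : List V) : Prop :=
  p.head? = some s ∧ p.getLast? = some t ∧ List.Chain' (fun u v => E (u, v)) p ∧ p.Nodup

/-- `p` respects the capacities for the demand of pair `i`. -/
def ValidPath (G : UFN V k) (i : Fin k) (p : List V) : Prop :=
  ∀ e ∈ edgesOf p, G.demand i ≤ G.cap e.1 e.2

/-- `T` is the unique valid transient path of pair `i` after resolving `U`. -/
def TransientPair (G : UFN V k) (U : Set (V × Fin k)) (i : Fin k) (T : List V) : Prop :=
  IsPathIn (G.active U i) G.s G.t T ∧ G.ValidPath i T ∧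
    ∀ p, IsPathIn (G.active U i) G.s G.t p → G.ValidPath i p → p = T

/-- After resolving `U`, every pair has a unique valid transient path, and the
family of transient paths jointly respects the capacities. -/
def TransientFamily (G : UFN V k) (U : Set (V × Fin k)) : Prop :=
  ∃ T : Fin k → List V,
    (∀ i, G.TransientPair U i (T i)) ∧
    (∀ u v : V, (∑ i : Fin k, if (u, v) ∈ edgesOf (T i) then G.demand i else 0) ≤ G.cap u v)

/-- An update sequence (an assignment of rounds to all updates) is feasible if
after resolving all updates of rounds `< r` together with any subset of the
updates of round `r`, all pairs admit a transient family. -/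
def Feasible (G : UFN V k) (R : V × Fin k → ℕ) : Prop :=
  ∀ r : ℕ, ∀ S : Set (V × Fin k), (∀ u ∈ S, R u = r) →
    G.TransientFamily ({u | R u < r} ∪ S)

/-- `p` is a simple path from the source to the terminal. -/
def IsStPath (G : UFN V k) (p : List V) : Prop :=
  p.head? = some G.s ∧ p.getLast? = some G.t ∧ p.Nodup

/-- Well-formedness of an update flow network: all old and new flows are simple
`s`-`t` paths, each pair forms a DAG, each new path respects capacities for its
own demand, and both the old family and the new family jointly respect the
capacities. -/
def WellFormed (G : UFN V k) : Prop :=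
  (∀ i, G.IsStPath (G.old i) ∧ G.IsStPath (G.new i)) ∧
  (∀ i, ∃ ord : V → ℕ, ∀ e ∈ edgesOf (G.old i) ++ edgesOf (G.new i), ord e.1 < ord e.2) ∧
  (∀ i, G.ValidPath i (G.new i)) ∧
  (∀ u v : V, (∑ i : Fin k, if (u, v) ∈ edgesOf (G.old i) then G.demand i else 0) ≤ G.cap u v) ∧
  (∀ u v : V, (∑ i : Fin k, if (u, v) ∈ edgesOf (G.new i) then G.demand i else 0) ≤ G.cap u v)

/-- The common vertices of the old and new path of pair `i`, in path order. -/
def commons (G : UFN V k) (i : Fin k) : List V :=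
  (G.old i).filter (fun v => decide (v ∈ G.new i))

/-- A block of pair `i` is a pair `(a, z)` of consecutive common vertices of the
old and new paths of `i`. -/
def IsBlock (G : UFN V k) (i : Fin k) (b : V × V) : Prop :=
  b ∈ edgesOf (G.commons i)

/-- A (candidate) block: a pair index together with its start and end vertices. -/
abbrev Blk (V : Type) (k : ℕ) := Fin k × V × V

def IsBlk (G : UFN V k) (b : Blk V k) : Prop := G.IsBlock b.1 b.2

/-- The old-path segment of a block. -/
def blkOldSeg (G : UFN V k) (b : Blk V k) : List V := segment (G.old b.1) b.2.1 b.2.2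

/-- The update-path segment of a block. -/
def blkNewSeg (G : UFN V k) (b : Blk V k) : List V := segment (G.new b.1) b.2.1 b.2.2

/-- Block `b1` depends on block `b2` (written `b1 → b2`) if they belong to
different pairs and some edge lies on `b1`'s update path and on `b2`'s old path
with capacity less than the sum of the two demands. -/
def Dep (G : UFN V k) (b1 b2 : Blk V k) : Prop :=
  G.IsBlk b1 ∧ G.IsBlk b2 ∧ b1.1 ≠ b2.1 ∧
  ∃ e : V × V, e ∈ edgesOf (G.blkNewSeg b1) ∧ e ∈ edgesOf (G.blkOldSeg b2) ∧
    G.cap e.1 e.2 < G.demand b1.1 + G.demand b2.1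

/-- The dependency graph contains a directed cycle. -/
def HasDepCycle (G : UFN V k) : Prop := ∃ b : Blk V k, Relation.TransGen G.Dep b b

/-- The number of rounds used by an update sequence. -/
def numRounds [Fintype V] (R : V × Fin k → ℕ) : ℕ :=
  (Finset.image R Finset.univ).card

/-- An update `(v, i)` is empty if `v`'s outgoing old edge and outgoing new edge
for pair `i` coincide (in particular if `v` has no outgoing edge for pair `i`). -/
def EmptyUpd (G : UFN V k) (u : V × Fin k) : Prop :=
  outEdge (G.old u.2) u.1 = outEdge (G.new u.2) u.1

instance (G : UFN V k) (u : V × Fin k) : Decidable (G.EmptyUpd u) :=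
  inferInstanceAs (Decidable (outEdge (G.old u.2) u.1 = outEdge (G.new u.2) u.1))

/-- `R` updates every block in (at most) 3 consecutive rounds: first all internal
update-path vertices of the block, then the start vertex, then all old-path-only
vertices of the block. -/
def BlockPattern (G : UFN V k) (R : V × Fin k → ℕ) : Prop :=
  ∀ b : Blk V k, G.IsBlk b → ∃ r : ℕ,
    (∀ v ∈ G.blkNewSeg b, v ≠ b.2.1 → v ≠ b.2.2 → R (v, b.1) = r) ∧
    R (b.2.1, b.1) = r + 1 ∧
    (∀ v ∈ G.blkOldSeg b, v ∉ G.new b.1 → R (v, b.1) = r + 2)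

/-- The size of the network (total length of the flow paths). -/
def size (G : UFN V k) : ℕ := ∑ i : Fin k, ((G.old i).length + (G.new i).length)

end UFN

end FlowUpdate


/-!
If block `b₁` depends on `b₂`, then `b₂` must be started strictly before `b₁`: at the round in
which `b₁`'s start vertex is updated, some transient family has `b₁`'s whole update segment on
the path of its pair and `b₂`'s whole old segment on the other path, and these share an edge
too small for both demands. So the start rounds along `c` strictly decrease. Both segment facts
come from following a transient path from the block's start vertex, which it must visit by the
DAG order: an internal vertex of the update (old) segment is not on the old (update) path, so
its only outgoing edge is forced. The same argument yields one more round: an internal update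
vertex of the last block is updated before its start, an internal old vertex of the first block
after it.
-/

namespace FlowUpdate

section Lists

variable {V : Type}

theorem edgesOf_cons_cons (a b : V) (l : List V) :
    edgesOf (a :: b :: l) = (a, b) :: edgesOf (b :: l) := rfl

theorem mem_edgesOf_iff {u v : V} {p : List V} :
    (u, v) ∈ edgesOf p ↔ ∃ l₁ l₂, p = l₁ ++ u :: v :: l₂ := by
  match p with
  | [] => simp [edgesOf]
  | [a] =>
    simp only [edgesOf, List.tail_cons, List.zip_nil_right, List.not_mem_nil, false_iff]
    rintro ⟨_ | ⟨_, _ | _⟩, _, h⟩ <;> simp at h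
  | a :: b :: r =>
    rw [edgesOf_cons_cons, List.mem_cons, mem_edgesOf_iff, Prod.mk.injEq]
    constructor
    · rintro (⟨rfl, rfl⟩ | ⟨l₁, l₂, h⟩)
      · exact ⟨[], r, rfl⟩
      · exact ⟨a :: l₁, l₂, by rw [h, List.cons_append]⟩
    · rintro ⟨_ | ⟨x, l₁⟩, l₂, h⟩
      · simp_all
      · exact Or.inr ⟨l₁, l₂, (List.cons.inj h).2⟩

theorem isChain_iff_forall_mem_edgesOf {Q : V → V → Prop} {p : List V} :
    p.IsChain Q ↔ ∀ e ∈ edgesOf p, Q e.1 e.2 := by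
  simp only [List.isChain_iff_forall_rel_of_append_cons_cons, Prod.forall, mem_edgesOf_iff]
  grind

theorem edgesOf_subset_of_infix {p q : List V} (h : q <:+: p) : edgesOf q ⊆ edgesOf p := by
  rintro ⟨u, v⟩ he
  obtain ⟨l₁, l₂, rfl⟩ := mem_edgesOf_iff.mp he
  obtain ⟨s, t, rfl⟩ := h
  exact mem_edgesOf_iff.mpr ⟨s ++ l₁, l₂ ++ t, by simp⟩

theorem fst_mem_of_mem_edgesOf {p : List V} {e : V × V} (h : e ∈ edgesOf p) : e.1 ∈ p := by
  obtain ⟨l₁, l₂, h⟩ := mem_edgesOf_iff.mp h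
  simp [h]

theorem snd_mem_of_mem_edgesOf {p : List V} {e : V × V} (h : e ∈ edgesOf p) : e.2 ∈ p := by
  obtain ⟨l₁, l₂, h⟩ := mem_edgesOf_iff.mp h
  simp [h]

theorem snd_eq_of_mem_edgesOf {p : List V} (hp : p.Nodup) {u v w : V}
    (hv : (u, v) ∈ edgesOf p) (hw : (u, w) ∈ edgesOf p) : v = w := by
  match p with
  | a :: b :: r =>
    rw [edgesOf_cons_cons, List.mem_cons] at hv hw
    have ha : a ∉ b :: r := (List.nodup_cons.mp hp).1
    rcases hv with hv | hv <;> rcases hw with hw | hw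
    · simp_all
    · cases hv
      exact absurd (fst_mem_of_mem_edgesOf hw) ha
    · cases hw
      exact absurd (fst_mem_of_mem_edgesOf hv) ha
    · exact snd_eq_of_mem_edgesOf (List.nodup_cons.mp hp).2 hv hw

theorem fst_ne_of_mem_edgesOf {p : List V} (hp : p.Nodup) {t : V} (ht : p.getLast? = some t)
    {e : V × V} (he : e ∈ edgesOf p) : e.1 ≠ t := by
  obtain ⟨l₁, l₂, rfl⟩ := mem_edgesOf_iff.mp he
  rw [List.getLast?_append_of_ne_nil _ (List.cons_ne_nil _ _)] at ht
  have hsuffix : (e.1 :: e.2 :: l₂).Nodup := hp.sublist (List.sublist_append_right _ _)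
  rintro rfl
  exact (List.nodup_cons.mp hsuffix).1 (List.mem_of_getLast? ht)

theorem exists_mem_edgesOf_of_ne {p : List V} {t u : V} (ht : p.getLast? = some t)
    (hu : u ∈ p) (hne : u ≠ t) : ∃ w, (u, w) ∈ edgesOf p := by
  obtain ⟨l₁, _ | ⟨w, l₂⟩, rfl⟩ := List.append_of_mem hu
  · simp_all
  · exact ⟨w, mem_edgesOf_iff.mpr ⟨l₁, l₂, rfl⟩⟩

theorem exists_mem_edgesOf_fst_ne {a : V} {l : List V} (hl : (a :: l).Nodup)
    (hlen : 2 ≤ (edgesOf (a :: l)).length) : ∃ e ∈ edgesOf (a :: l), e.1 ≠ a := by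
  match l, hlen with
  | b :: c :: r, _ =>
    refine ⟨(b, c), by simp [edgesOf_cons_cons], fun h => ?_⟩
    simp_all

theorem exists_mem_edgesOf_le_lt {α : Type*} [LinearOrder α] (f : V → α) {c : α} {p : List V}
    {s t : V} (hs : p.head? = some s) (ht : p.getLast? = some t) (hsc : f s ≤ c) (hct : c < f t) :
    ∃ e ∈ edgesOf p, f e.1 ≤ c ∧ c < f e.2 := by
  induction p generalizing s with
  | nil => simp at hs
  | cons a q ih =>
    obtain rfl : a = s := by simpa using hs
    cases q with
    | nil =>
      obtain rfl : a = t := by simpa using ht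
      exact absurd (hsc.trans_lt hct) (lt_irrefl _)
    | cons b r =>
      rw [edgesOf_cons_cons]
      by_cases hb : f b ≤ c
      · obtain ⟨e, he, h⟩ := ih rfl (by simpa using ht) hb
        exact ⟨e, List.mem_cons_of_mem _ he, h⟩
      · exact ⟨(a, b), List.mem_cons_self, hsc, lt_of_not_ge hb⟩

variable [DecidableEq V]

theorem segment_eq {p l₁ m r : List V} {a z : V} (hp : p = l₁ ++ a :: (m ++ z :: r))
    (hnd : p.Nodup) : segment p a z = a :: (m ++ [z]) := by
  subst hp
  simp only [List.nodup_append, List.nodup_cons, List.mem_append, List.mem_cons] at hnd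
  have : a ∉ l₁ := fun h => hnd.2.2 a h a (Or.inl rfl) rfl
  simp_all [segment]

end Lists

section Ord

variable {V : Type} {α : Type*} [Preorder α] {ord : V → α} {p : List V}

theorem eq_of_mem_edgesOf_of_le_of_lt (hp : p.Pairwise (ord · < ord ·)) {x y a : V}
    (he : (x, y) ∈ edgesOf p) (ha : a ∈ p) (hx : ord x ≤ ord a) (hy : ord a < ord y) :
    x = a := by
  obtain ⟨l₁, l₂, rfl⟩ := mem_edgesOf_iff.mp he
  simp only [List.pairwise_append, List.pairwise_cons, List.mem_cons] at hp
  rcases List.mem_append.mp ha with ha | ha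
  · exact absurd (hp.2.2 a ha x (Or.inl rfl)) hx.not_gt
  · rcases List.mem_cons.mp ha with rfl | ha
    · rfl
    rcases List.mem_cons.mp ha with rfl | ha
    · exact absurd hy (lt_irrefl _)
    · exact absurd (hp.2.1.2.1 a ha) hy.not_gt

theorem ord_head_le (hp : p.Pairwise (ord · < ord ·)) {s a : V} (hs : p.head? = some s)
    (ha : a ∈ p) : ord s ≤ ord a := by
  obtain ⟨l, rfl⟩ : ∃ l, p = s :: l := List.head?_eq_some_iff.mp hs
  rcases List.mem_cons.mp ha with rfl | ha
  · rfl
  · exact ((List.pairwise_cons.mp hp).1 a ha).le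

theorem ord_lt_getLast (hp : p.Pairwise (ord · < ord ·)) {t a : V} (ht : p.getLast? = some t)
    (ha : a ∈ p) (hat : a ≠ t) : ord a < ord t := by
  obtain ⟨l, rfl⟩ := List.getLast?_eq_some_iff.mp ht
  rcases List.mem_append.mp ha with ha | ha
  · exact (List.pairwise_append.mp hp).2.2 a ha t (List.mem_singleton_self t)
  · exact absurd (List.mem_singleton.mp ha) hat

variable [DecidableEq V]

theorem filter_mem_comm {q : List V} (hp : p.Pairwise (ord · < ord ·))
    (hq : q.Pairwise (ord · < ord ·)) :
    p.filter (fun v => decide (v ∈ q)) = q.filter (fun v => decide (v ∈ p)) := by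
  refine List.Perm.eq_of_pairwise (le := (ord · < ord ·)) (fun _ _ _ _ h h' => absurd h h'.asymm)
    (hp.filter _) (hq.filter _) ?_
  rw [List.perm_ext_iff_of_nodup (hp.nodup.filter _) (hq.nodup.filter _)]
  simp [and_comm]

theorem exists_segment_of_mem_edgesOf_filter {q : List V} (hp : p.Pairwise (ord · < ord ·))
    {a z : V} (hb : (a, z) ∈ edgesOf (p.filter (fun v => decide (v ∈ q)))) :
    ∃ m, segment p a z = a :: (m ++ [z]) ∧ segment p a z <:+: p ∧ ∀ v ∈ m, v ∉ q := by
  obtain ⟨l₁, l₂, hF⟩ := mem_edgesOf_iff.mp hb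
  have hsub : List.Sublist [a, z] p := by
    refine List.Sublist.trans ?_ (List.filter_sublist (p := fun v => decide (v ∈ q)))
    rw [hF]
    simp
  obtain ⟨r₁, r₂, hpr, har₁, hzr₂⟩ := List.cons_sublist_iff.mp hsub
  obtain ⟨L, M, rfl⟩ := List.append_of_mem har₁
  obtain ⟨m, r, hmr⟩ :=
    List.append_of_mem (List.mem_append_right M (List.singleton_sublist.mp hzr₂))
  have hpd : p = L ++ a :: (m ++ z :: r) := by simp [hpr, ← hmr]
  have hseg := segment_eq hpd hp.nodup
  refine ⟨m, hseg, by rw [hseg, hpd]; exact ⟨L, r, by simp⟩, fun v hv hvq => ?_⟩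
  have hvF : v ∈ p.filter (fun v => decide (v ∈ q)) := by simp [hpd, hv, hvq]
  have hazv : List.Sublist [a, v, z] p := by
    rw [hpd]
    refine (List.Sublist.cons_cons a ?_).trans (List.sublist_append_right L _)
    exact (List.singleton_sublist.mpr hv).append (List.singleton_sublist.mpr List.mem_cons_self)
  obtain ⟨hav, hvz⟩ := List.pairwise_cons.mp (hp.sublist hazv)
  have hav := hav v (by simp)
  obtain rfl := eq_of_mem_edgesOf_of_le_of_lt (hp.filter _) hb hvF hav.le (by simpa using hvz)
  exact lt_irrefl _ hav

theorem exists_mem_edgesOf_segment_fst_ne {q : List V} (hp : p.Pairwise (ord · < ord ·))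
    {a z : V} (hb : (a, z) ∈ edgesOf (p.filter (fun v => decide (v ∈ q))))
    (hlen : 2 ≤ (edgesOf (segment p a z)).length) : ∃ e ∈ edgesOf (segment p a z), e.1 ≠ a := by
  obtain ⟨m, hseg, hinf, -⟩ := exists_segment_of_mem_edgesOf_filter hp hb
  have hnd := hinf.sublist.nodup hp.nodup
  rw [hseg] at hlen hnd ⊢
  exact exists_mem_edgesOf_fst_ne hnd hlen

end Ord

section Walks

variable {V : Type} {E : V × V → Prop} {T : List V} {s t : V}

theorem edgesOf_subset_of_forced {P S : List V} {a : V} (hP : P.Nodup)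
    (hPt : P.getLast? = some t) (hT : T.IsChain (fun u v => E (u, v)))
    (hTt : T.getLast? = some t) (hS : a :: S <:+: P)
    (hforce : ∀ e ∈ edgesOf (a :: S), ∀ w, E (e.1, w) → (e.1, w) ∈ edgesOf P) (ha : a ∈ T) :
    edgesOf (a :: S) ⊆ edgesOf T := by
  induction S generalizing a with
  | nil => simp [edgesOf]
  | cons b S ih =>
    have hab : (a, b) ∈ edgesOf (a :: b :: S) := by simp [edgesOf_cons_cons]
    obtain ⟨w, hw⟩ := exists_mem_edgesOf_of_ne hTt ha
      (fst_ne_of_mem_edgesOf hP hPt (edgesOf_subset_of_infix hS hab))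
    obtain rfl : b = w := snd_eq_of_mem_edgesOf hP (edgesOf_subset_of_infix hS hab)
      (hforce _ hab w (isChain_iff_forall_mem_edgesOf.mp hT _ hw))
    rw [edgesOf_cons_cons, List.cons_subset]
    refine ⟨hw, ih ((List.suffix_cons a _).isInfix.trans hS) (fun e he => ?_)
      (snd_mem_of_mem_edgesOf hw)⟩
    exact hforce e (by simp [edgesOf_cons_cons, he])

variable {α : Type*} [LinearOrder α] {ord : V → α} {P Q : List V}

theorem mem_of_isPathIn_of_mem_of_mem (hP : P.Pairwise (ord · < ord ·))
    (hQ : Q.Pairwise (ord · < ord ·)) (hPs : P.head? = some s) (hPt : P.getLast? = some t)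
    (hE : ∀ e, E e → e ∈ edgesOf P ∨ e ∈ edgesOf Q) (hT : UFN.IsPathIn E s t T) {a : V}
    (haP : a ∈ P) (haQ : a ∈ Q) (hat : a ≠ t) : a ∈ T := by
  obtain ⟨hTs, hTt, hTE, -⟩ := hT
  obtain ⟨e, he, hle, hlt⟩ := exists_mem_edgesOf_le_lt ord hTs hTt (ord_head_le hP hPs haP)
    (ord_lt_getLast hP hPt haP hat)
  have hEe : E e := isChain_iff_forall_mem_edgesOf.mp hTE e he
  obtain rfl : e.1 = a := by
    rcases hE e hEe with h | h
    · exact eq_of_mem_edgesOf_of_le_of_lt hP h haP hle hlt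
    · exact eq_of_mem_edgesOf_of_le_of_lt hQ h haQ hle hlt
  exact fst_mem_of_mem_edgesOf he

variable [DecidableEq V]

-- `onP v`: the transient path leaves `v` along `P` (for a pair `i` and update set `U`, this is
-- `(v, i) ∈ U` when `P` is the update path and `(v, i) ∉ U` when it is the old path).
theorem edgesOf_segment_subset_of_isPathIn {onP : V → Prop} (hP : P.Pairwise (ord · < ord ·))
    (hQ : Q.Pairwise (ord · < ord ·)) (hPs : P.head? = some s) (hPt : P.getLast? = some t)
    {a z : V} (hb : (a, z) ∈ edgesOf (P.filter (fun v => decide (v ∈ Q))))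
    (hE : ∀ e, E e → e ∈ edgesOf P ∧ onP e.1 ∨ e ∈ edgesOf Q ∧ ¬ onP e.1)
    (hT : UFN.IsPathIn E s t T) (ha : onP a) :
    ∀ e ∈ edgesOf (segment P a z), e ∈ edgesOf T ∧ onP e.1 := by
  obtain ⟨m, hseg, hinf, hm⟩ := exists_segment_of_mem_edgesOf_filter hP hb
  have hnd : (segment P a z).Nodup := hinf.sublist.nodup hP.nodup
  have hforce : ∀ e ∈ edgesOf (segment P a z), ∀ w, E (e.1, w) →
      (e.1, w) ∈ edgesOf P ∧ onP e.1 := by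
    intro e he w hw
    have hez : e.1 ≠ z := fst_ne_of_mem_edgesOf hnd
      (by rw [hseg, ← List.cons_append, List.getLast?_concat]) he
    have hea : e.1 = a ∨ e.1 ∈ m := by
      simpa [hseg, hez] using fst_mem_of_mem_edgesOf he
    rcases hE _ hw with h | ⟨hQe, hon⟩
    · exact h
    · rcases hea with h | h
      · exact absurd (h ▸ ha) hon
      · exact absurd (fst_mem_of_mem_edgesOf hQe) (hm _ h)
  obtain ⟨b, l, hbl⟩ : ∃ b l, m ++ [z] = b :: l := List.exists_cons_of_ne_nil (by simp)
  have hab : (a, b) ∈ edgesOf P :=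
    edgesOf_subset_of_infix hinf (by simp [hseg, hbl, edgesOf_cons_cons])
  have haT : a ∈ T := by
    have haPQ := List.mem_filter.mp (fst_mem_of_mem_edgesOf hb)
    refine mem_of_isPathIn_of_mem_of_mem hP hQ hPs hPt (fun e he => ?_) hT haPQ.1
      (by simpa using haPQ.2) (fst_ne_of_mem_edgesOf hP.nodup hPt hab)
    rcases hE e he with h | h
    · exact Or.inl h.1
    · exact Or.inr h.1
  have hsub : edgesOf (segment P a z) ⊆ edgesOf T := by
    rw [hseg] at hinf hforce ⊢
    exact edgesOf_subset_of_forced hP.nodup hPt hT.2.2.1 hT.2.1 hinf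
      (fun e he w hw => (hforce e he w hw).1) haT
  exact fun e he =>
    ⟨hsub he, (hforce e he e.2 (isChain_iff_forall_mem_edgesOf.mp hT.2.2.1 e (hsub he))).2⟩

end Walks

namespace UFN

variable {V : Type} [DecidableEq V] {k : ℕ} {G : UFN V k}

theorem WellFormed.exists_ord (hWF : G.WellFormed) (i : Fin k) : ∃ ord : V → ℕ,
    (G.old i).Pairwise (ord · < ord ·) ∧ (G.new i).Pairwise (ord · < ord ·) := by
  obtain ⟨ord, hord⟩ := hWF.2.1 i
  have pairwise {p : List V} (hp : ∀ e ∈ edgesOf p, ord e.1 < ord e.2) :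
      p.Pairwise (ord · < ord ·) :=
    List.pairwise_map.mp
      ((List.isChain_map ord).mpr (isChain_iff_forall_mem_edgesOf.mpr hp)).pairwise
  exact ⟨ord, pairwise fun e he => hord e (List.mem_append_left _ he),
    pairwise fun e he => hord e (List.mem_append_right _ he)⟩

theorem IsBlk.mem_edgesOf_filter_new (hWF : G.WellFormed) {b : Blk V k} (hb : G.IsBlk b) :
    b.2 ∈ edgesOf ((G.new b.1).filter (fun v => decide (v ∈ G.old b.1))) := by
  obtain ⟨ord, hold, hnew⟩ := hWF.exists_ord b.1
  rw [← filter_mem_comm hold hnew]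
  exact hb

variable {b : Blk V k} {U : Set (V × Fin k)} {T : List V}

theorem edgesOf_blkNewSeg_subset (hWF : G.WellFormed) (hb : G.IsBlk b)
    (hT : IsPathIn (G.active U b.1) G.s G.t T) (ha : (b.2.1, b.1) ∈ U) :
    ∀ e ∈ edgesOf (G.blkNewSeg b), e ∈ edgesOf T ∧ (e.1, b.1) ∈ U := by
  obtain ⟨ord, hold, hnew⟩ := hWF.exists_ord b.1
  obtain ⟨-, hs, ht, -⟩ := hWF.1 b.1
  exact edgesOf_segment_subset_of_isPathIn (onP := fun v => (v, b.1) ∈ U) hnew hold hs ht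
    (hb.mem_edgesOf_filter_new hWF) (fun _ he => he.symm) hT ha

theorem edgesOf_blkOldSeg_subset (hWF : G.WellFormed) (hb : G.IsBlk b)
    (hT : IsPathIn (G.active U b.1) G.s G.t T) (ha : (b.2.1, b.1) ∉ U) :
    ∀ e ∈ edgesOf (G.blkOldSeg b), e ∈ edgesOf T ∧ (e.1, b.1) ∉ U := by
  obtain ⟨ord, hold, hnew⟩ := hWF.exists_ord b.1
  obtain ⟨⟨hs, ht, -⟩, -⟩ := hWF.1 b.1
  exact edgesOf_segment_subset_of_isPathIn (onP := fun v => (v, b.1) ∉ U) hold hnew hs ht hb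
    (fun _ he => he.imp_right fun h => ⟨h.1, not_not_intro h.2⟩) hT ha

theorem exists_mem_edgesOf_blkNewSeg_fst_ne (hWF : G.WellFormed) (hb : G.IsBlk b)
    (hlen : 2 ≤ (edgesOf (G.blkNewSeg b)).length) :
    ∃ e ∈ edgesOf (G.blkNewSeg b), e.1 ≠ b.2.1 := by
  obtain ⟨ord, -, hnew⟩ := hWF.exists_ord b.1
  exact exists_mem_edgesOf_segment_fst_ne hnew (hb.mem_edgesOf_filter_new hWF) hlen

theorem exists_mem_edgesOf_blkOldSeg_fst_ne (hWF : G.WellFormed) (hb : G.IsBlk b)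
    (hlen : 2 ≤ (edgesOf (G.blkOldSeg b)).length) :
    ∃ e ∈ edgesOf (G.blkOldSeg b), e.1 ≠ b.2.1 := by
  obtain ⟨ord, hold, -⟩ := hWF.exists_ord b.1
  exact exists_mem_edgesOf_segment_fst_ne hold hb hlen

variable {R : V × Fin k → ℕ}

theorem Feasible.transientFamily (hR : G.Feasible R) (u : V × Fin k) :
    G.TransientFamily ({x | R x < R u} ∪ {u}) :=
  hR (R u) {u} (by simp)

theorem Feasible.exists_lt_of_two_le_length_blkNewSeg (hWF : G.WellFormed) (hR : G.Feasible R)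
    (hb : G.IsBlk b) (hlen : 2 ≤ (edgesOf (G.blkNewSeg b)).length) :
    ∃ v, R (v, b.1) < R (b.2.1, b.1) := by
  obtain ⟨e, he, hea⟩ := exists_mem_edgesOf_blkNewSeg_fst_ne hWF hb hlen
  obtain ⟨T, hT, -⟩ := hR.transientFamily (b.2.1, b.1)
  have := (edgesOf_blkNewSeg_subset hWF hb (hT b.1).1 (Or.inr rfl) e he).2
  exact ⟨e.1, by simpa [hea] using this⟩

theorem Feasible.exists_gt_of_two_le_length_blkOldSeg (hWF : G.WellFormed) (hR : G.Feasible R)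
    (hb : G.IsBlk b) (hlen : 2 ≤ (edgesOf (G.blkOldSeg b)).length) :
    ∃ v, R (b.2.1, b.1) < R (v, b.1) := by
  obtain ⟨e, he, hea⟩ := exists_mem_edgesOf_blkOldSeg_fst_ne hWF hb hlen
  refine ⟨e.1, lt_of_not_ge fun hle => ?_⟩
  obtain ⟨T, hT, -⟩ := hR.transientFamily (e.1, b.1)
  have ha : (b.2.1, b.1) ∉ {x | R x < R (e.1, b.1)} ∪ {(e.1, b.1)} := by
    simp [Ne.symm hea, hle]
  exact (edgesOf_blkOldSeg_subset hWF hb (hT b.1).1 ha e he).2 (Or.inr rfl)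

theorem Feasible.lt_of_dep (hWF : G.WellFormed) (hR : G.Feasible R) {b₁ b₂ : Blk V k}
    (hdep : G.Dep b₁ b₂) : R (b₂.2.1, b₂.1) < R (b₁.2.1, b₁.1) := by
  obtain ⟨hb₁, hb₂, hne, ⟨u, v⟩, he₁, he₂, hcap⟩ := hdep
  refine lt_of_not_ge fun hle => ?_
  obtain ⟨T, hT, hsum⟩ := hR.transientFamily (b₁.2.1, b₁.1)
  have ha₂ : (b₂.2.1, b₂.1) ∉ {x | R x < R (b₁.2.1, b₁.1)} ∪ {(b₁.2.1, b₁.1)} := by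
    simp [Ne.symm hne, hle]
  have h₁ := (edgesOf_blkNewSeg_subset hWF hb₁ (hT b₁.1).1 (Or.inr rfl) _ he₁).1
  have h₂ := (edgesOf_blkOldSeg_subset hWF hb₂ (hT b₂.1).1 ha₂ _ he₂).1
  have hload : G.demand b₁.1 + G.demand b₂.1 ≤ G.cap u v := calc
    _ = ∑ i ∈ {b₁.1, b₂.1}, if (u, v) ∈ edgesOf (T i) then G.demand i else 0 := by
      rw [Finset.sum_pair hne, if_pos h₁, if_pos h₂]
    _ ≤ ∑ i, if (u, v) ∈ edgesOf (T i) then G.demand i else 0 :=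
      Finset.sum_le_sum_of_subset (Finset.subset_univ _)
    _ ≤ G.cap u v := hsum u v
  exact absurd hcap (not_lt.mpr hload)

end UFN

theorem length_le_numRounds {V : Type} [Fintype V] {k : ℕ} {R : V × Fin k → ℕ}
    {l : List (V × Fin k)} (hl : (l.map R).IsChain (· > ·)) : l.length ≤ UFN.numRounds R := by
  have hnd : (l.map R).Nodup := hl.pairwise.imp ne_of_gt
  rw [UFN.numRounds, ← List.length_map (f := R), ← List.toFinset_card_of_nodup hnd]
  refine Finset.card_le_card fun x hx => ?_
  obtain ⟨u, -, rfl⟩ := List.mem_map.mp (List.mem_toFinset.mp hx)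
  exact Finset.mem_image_of_mem R (Finset.mem_univ u)

end FlowUpdate

open FlowUpdate in
theorem stmt16_general {V : Type} [DecidableEq V] [Fintype V] (G : UFN V 2)
    (hWF : G.WellFormed)
    (c : List (UFN.Blk V 2))
    (hblocks : ∀ b ∈ c, G.IsBlk b) (hchain : List.Chain' G.Dep c)
    (hcond : (∃ b, c.getLast? = some b ∧ 2 ≤ (edgesOf (G.blkNewSeg b)).length) ∨
             (∃ b, c.head? = some b ∧ 2 ≤ (edgesOf (G.blkOldSeg b)).length))
    (R : V × Fin 2 → ℕ) (hR : G.Feasible R) :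
    c.length + 1 ≤ UFN.numRounds R := by
  let start : UFN.Blk V 2 → V × Fin 2 := fun b => (b.2.1, b.1)
  have hdec : ((c.map start).map R).IsChain (· > ·) := by
    rw [List.map_map, List.isChain_map]
    exact hchain.imp fun _ _ h => hR.lt_of_dep hWF h
  rcases hcond with ⟨b, hlast, hlen⟩ | ⟨b, hhead, hlen⟩
  · obtain ⟨v, hv⟩ := hR.exists_lt_of_two_le_length_blkNewSeg hWF
      (hblocks b (List.mem_of_getLast? hlast)) hlen
    have hext : ((c.map start ++ [(v, b.1)]).map R).IsChain (· > ·) := by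
      rw [List.map_append, List.isChain_append]
      exact ⟨hdec, List.isChain_singleton _, by simp [List.getLast?_map, hlast, start, hv]⟩
    simpa using length_le_numRounds hext
  · obtain ⟨v, hv⟩ := hR.exists_gt_of_two_le_length_blkOldSeg hWF
      (hblocks b (List.mem_of_head? hhead)) hlen
    have hext : (((v, b.1) :: c.map start).map R).IsChain (· > ·) := by
      rw [List.map_cons, List.isChain_cons]
      exact ⟨by simp [List.head?_map, hhead, start, hv], hdec⟩
    simpa using length_le_numRounds hext

open FlowUpdate in
/-- For an update flow network with two flow pairs whose
dependency graph is acyclic, any feasible update sequence uses at least `L + 1`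
rounds, where `L` is the number of blocks on a (longest) directed path in the
dependency graph, provided the earliest-scheduled block on that path (its last
vertex) has at least 2 update edges or the latest-scheduled one (its first
vertex) has at least 2 old edges. -/
theorem stmt16 {V : Type} [DecidableEq V] [Fintype V] (G : UFN V 2)
    (hWF : G.WellFormed) (hacyc : ¬ G.HasDepCycle)
    (c : List (UFN.Blk V 2)) (hne : c ≠ [])
    (hblocks : ∀ b ∈ c, G.IsBlk b) (hchain : List.Chain' G.Dep c)
    (hcond : (∃ b, c.getLast? = some b ∧ 2 ≤ (edgesOf (G.blkNewSeg b)).length) ∨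
             (∃ b, c.head? = some b ∧ 2 ≤ (edgesOf (G.blkOldSeg b)).length))
    (R : V × Fin 2 → ℕ) (hR : G.Feasible R) :
    c.length + 1 ≤ UFN.numRounds R :=
  stmt16_general G hWF c hblocks hchain hcond R hR
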